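/- arXiv:1612.03814 — 3 statements merged into one kernel-verified Lean document; each statement's English description precedes it below -/
import Mathlib

section
/- Let E1 and E2 be equivalence relations on V and suppose (E1, E2) is the unique LL-solution of the operator F = l_{E2} ∘ l_{E1}. Then for every x ∈ V: if [x]_{E1} ⊇ [x]_{E2} then [x]_{E2} has exactly one element, and if [x]_{E2} ⊇ [x]_{E1} then [x]_{E1} has exactly one element. -/
variable {V : Type*}

/-- The lower approximation of `X` w.r.t. the equivalence relation `E`:
all points whose `E`-class is contained in `X`. -/
def lowerApprox (E : Setoid V) (X : Set V) : Set V := {x | {y | E.r x y} ⊆ X}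

/-- The upper approximation of `X` w.r.t. the equivalence relation `E`:
all points whose `E`-class meets `X`. -/
def upperApprox (E : Setoid V) (X : Set V) : Set V := {x | ({y | E.r x y} ∩ X).Nonempty}

/-- The positive region of `D` with respect to `C`: the union over the
`D`-equivalence classes of their `C`-lower approximations. -/
def posRegion (C D : Setoid V) : Set V := ⋃ x : V, lowerApprox C {y | D.r x y}

/-- `(E1, E2)` is an LL-solution of `F` if `F X = l_{E2}(l_{E1}(X))` for all `X`. -/
def IsLLSolution (E1 E2 : Setoid V) (F : Set V → Set V) : Prop :=
  ∀ X : Set V, F X = lowerApprox E2 (lowerApprox E1 X)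

/-- `(E1, E2)` is the unique LL-solution of `F`. -/
def IsUniqueLLSolution (E1 E2 : Setoid V) (F : Set V → Set V) : Prop :=
  IsLLSolution E1 E2 F ∧
    ∀ E3 E4 : Setoid V, IsLLSolution E3 E4 F → E3 = E1 ∧ E4 = E2

/-- `(E1, E2)` is a UU-solution of `F` if `F X = u_{E2}(u_{E1}(X))` for all `X`. -/
def IsUUSolution (E1 E2 : Setoid V) (F : Set V → Set V) : Prop :=
  ∀ X : Set V, F X = upperApprox E2 (upperApprox E1 X)

/-- `(E1, E2)` is the unique UU-solution of `F`. -/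
def IsUniqueUUSolution (E1 E2 : Setoid V) (F : Set V → Set V) : Prop :=
  IsUUSolution E1 E2 F ∧
    ∀ E3 E4 : Setoid V, IsUUSolution E3 E4 F → E3 = E1 ∧ E4 = E2

/-- `(E1, E2)` is a UL-solution of `F` if `F X = u_{E2}(l_{E1}(X))` for all `X`. -/
def IsULSolution (E1 E2 : Setoid V) (F : Set V → Set V) : Prop :=
  ∀ X : Set V, F X = upperApprox E2 (lowerApprox E1 X)

/-- `(E1, E2)` is the unique UL-solution of `F`. -/
def IsUniqueULSolution (E1 E2 : Setoid V) (F : Set V → Set V) : Prop :=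
  IsULSolution E1 E2 F ∧
    ∀ E3 E4 : Setoid V, IsULSolution E3 E4 F → E3 = E1 ∧ E4 = E2

/-- `(E1, E2)` is an LU-solution of `F` if `F X = l_{E2}(u_{E1}(X))` for all `X`. -/
def IsLUSolution (E1 E2 : Setoid V) (F : Set V → Set V) : Prop :=
  ∀ X : Set V, F X = lowerApprox E2 (upperApprox E1 X)

/-- `(E1, E2)` is the unique LU-solution of `F`. -/
def IsUniqueLUSolution (E1 E2 : Setoid V) (F : Set V → Set V) : Prop :=
  IsLUSolution E1 E2 F ∧
    ∀ E3 E4 : Setoid V, IsLUSolution E3 E4 F → E3 = E1 ∧ E4 = E2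

/-! `l_{E₂} ∘ l_{E₁}` only depends on the composite relation `Comp E₂ E₁` (step within an `E₂`-class,
then within an `E₁`-class). If `[x]_E ⊆ [x]_F`, splitting `[x]_E` into singletons leaves `Comp E F`
and `Comp F E` unchanged, so it yields a second LL-solution; uniqueness then forces the split relation
to equal `E`, i.e. `[x]_E = {x}`. -/

open Relation

def Setoid.splitClass (E : Setoid V) (x : V) : Setoid V where
  r y z := y = z ∨ (E.r y z ∧ ¬ E.r x y)
  iseqv := by
    refine ⟨fun y => Or.inl rfl, ?_, ?_⟩
    · rintro y z (rfl | ⟨hyz, hxy⟩)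
      · exact Or.inl rfl
      · exact Or.inr ⟨E.symm hyz, fun hxz => hxy (E.trans hxz (E.symm hyz))⟩
    · rintro y z w (rfl | ⟨hyz, hxy⟩) hzw
      · exact hzw
      · rcases hzw with rfl | ⟨hzw, -⟩
        · exact Or.inr ⟨hyz, hxy⟩
        · exact Or.inr ⟨E.trans hyz hzw, hxy⟩

theorem Setoid.flip_r (E : Setoid V) : flip E.r = E.r :=
  funext₂ fun _ _ => propext E.comm'

theorem lowerApprox_lowerApprox (E₁ E₂ : Setoid V) (X : Set V) :
    lowerApprox E₂ (lowerApprox E₁ X) = {y | ∀ z, Comp E₂.r E₁.r y z → z ∈ X} := by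
  ext y
  exact ⟨fun hy z ⟨_, hyw, hwz⟩ => hy hyw hwz, fun hy _ hyw _ hwz => hy _ ⟨_, hyw, hwz⟩⟩

theorem isLLSolution_of_comp_eq {E₁ E₂ E₃ E₄ : Setoid V}
    (hcomp : Comp E₄.r E₃.r = Comp E₂.r E₁.r) :
    IsLLSolution E₃ E₄ (fun X => lowerApprox E₂ (lowerApprox E₁ X)) := by
  intro X
  simp only [lowerApprox_lowerApprox, hcomp]

variable {E F : Setoid V} {x : V}

theorem splitClass_comp (hsub : {w | E.r x w} ⊆ {w | F.r x w}) :
    Comp (E.splitClass x).r F.r = Comp E.r F.r := by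
  funext y z
  apply propext
  constructor
  · rintro ⟨w, rfl | ⟨hyw, -⟩, hwz⟩
    · exact ⟨y, E.refl y, hwz⟩
    · exact ⟨w, hyw, hwz⟩
  · rintro ⟨w, hyw, hwz⟩
    by_cases hxy : E.r x y
    · -- `[y]_E = [x]_E ⊆ [x]_F = [y]_F`, so the `E`-step can be absorbed into the `F`-step.
      have hFyw : F.r y w := F.trans (F.symm (hsub hxy)) (hsub (E.trans hxy hyw))
      exact ⟨y, Or.inl rfl, F.trans hFyw hwz⟩
    · exact ⟨w, Or.inr ⟨hyw, hxy⟩, hwz⟩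

theorem comp_splitClass (hsub : {w | E.r x w} ⊆ {w | F.r x w}) :
    Comp F.r (E.splitClass x).r = Comp F.r E.r := by
  have hflip := congrArg flip (splitClass_comp hsub)
  simpa only [flip_comp, Setoid.flip_r] using hflip

theorem eq_singleton_of_splitClass_eq (heq : E.splitClass x = E) : {w | E.r x w} = {x} := by
  ext w
  refine ⟨fun hxw => ?_, fun hw => hw ▸ E.refl x⟩
  rw [← heq] at hxw
  rcases hxw with rfl | ⟨-, hxx⟩
  · rfl
  · exact absurd (E.refl x) hxx

theorem stmt_11_general (E1 E2 : Setoid V)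
    (h : IsUniqueLLSolution E1 E2 (fun X => lowerApprox E2 (lowerApprox E1 X)))
    (x : V) :
    ({w | E2.r x w} ⊆ {w | E1.r x w} → ∃ a : V, {w | E2.r x w} = {a}) ∧
    ({w | E1.r x w} ⊆ {w | E2.r x w} → ∃ a : V, {w | E1.r x w} = {a}) := by
  refine ⟨fun hsub => ⟨x, eq_singleton_of_splitClass_eq ?_⟩,
    fun hsub => ⟨x, eq_singleton_of_splitClass_eq ?_⟩⟩
  · exact (h.2 E1 (E2.splitClass x) (isLLSolution_of_comp_eq (splitClass_comp hsub))).2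
  · exact (h.2 (E1.splitClass x) E2 (isLLSolution_of_comp_eq (comp_splitClass hsub))).1

theorem stmt_11 [Fintype V] [Nonempty V] (E1 E2 : Setoid V)
    (h : IsUniqueLLSolution E1 E2 (fun X => lowerApprox E2 (lowerApprox E1 X)))
    (x : V) :
    ({w | E2.r x w} ⊆ {w | E1.r x w} → ∃ a : V, {w | E2.r x w} = {a}) ∧
    ({w | E1.r x w} ⊆ {w | E2.r x w} → ∃ a : V, {w | E1.r x w} = {a}) :=
  stmt_11_general E1 E2 h x
end

section
/- Let E1 and E2 be equivalence relations on V and suppose (E1, E2) is the unique LL-solution of the operator F = l_{E2} ∘ l_{E1}. Then for every x ∈ V, the lower approximation l_{E2}([x]_{E1}) has at most one element, and the lower approximation l_{E1}([x]_{E2}) has at most one element. -/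
variable {V : Type*}

/-!
Let `A = l_{E2}([x]_{E1})`. It is a union of `E2`-classes lying inside a single `E1`-class, so
every `E1`-lower approximation contains `A` or misses it. Hence redefining `E2` on `A` in any
way whatever does not change `l_{E2} ∘ l_{E1}`. By uniqueness, `E2` agrees both with the
discrete and with the indiscrete relation on `A`, which forces `A` to have at most one point.
The same works for `l_{E1}([x]_{E2})`: redefining `E1` on it changes `l_{E1}(X)` only inside
one `E2`-class, and only in a way that `l_{E2}` cannot see.
-/

namespace Setoid

def IsSaturated (E : Setoid V) (A : Set V) : Prop := ∀ ⦃y z⦄, E.r y z → y ∈ A → z ∈ A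

def patch (E R : Setoid V) (A : Set V) : Setoid V where
  r y z := (y ∈ A ∧ z ∈ A ∧ R.r y z) ∨ (y ∉ A ∧ z ∉ A ∧ E.r y z)
  iseqv := by
    refine ⟨fun y => ?_, fun {y z} h => ?_, fun {y z w} h₁ h₂ => ?_⟩
    · by_cases hy : y ∈ A
      · exact .inl ⟨hy, hy, R.refl y⟩
      · exact .inr ⟨hy, hy, E.refl y⟩
    · rcases h with ⟨hy, hz, h⟩ | ⟨hy, hz, h⟩
      · exact .inl ⟨hz, hy, R.symm h⟩
      · exact .inr ⟨hz, hy, E.symm h⟩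
    · rcases h₁ with ⟨hy, hz, h₁⟩ | ⟨hy, hz, h₁⟩ <;> rcases h₂ with ⟨hz', hw, h₂⟩ | ⟨hz', hw, h₂⟩
      · exact .inl ⟨hy, hw, R.trans h₁ h₂⟩
      · exact absurd hz hz'
      · exact absurd hz' hz
      · exact .inr ⟨hy, hw, E.trans h₁ h₂⟩

variable {E E' R : Setoid V} {A : Set V}

lemma isSaturated_patch : (E.patch R A).IsSaturated A := by
  rintro y z (⟨-, hz, -⟩ | ⟨hy, -, -⟩) hyA
  exacts [hz, absurd hyA hy]

lemma patch_rel_iff_of_notMem (hA : E.IsSaturated A) {y z : V} (hy : y ∉ A) :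
    (E.patch R A).r y z ↔ E.r y z := by
  refine ⟨?_, fun h => .inr ⟨hy, fun hz => hy (hA (E.symm h) hz), h⟩⟩
  rintro (⟨hy', -, -⟩ | ⟨-, -, h⟩)
  exacts [absurd hy' hy, h]

lemma subsingleton_of_patch_bot_eq_patch_top (h : E.patch ⊥ A = E'.patch ⊤ A) :
    A.Subsingleton := by
  intro a ha b hb
  have hab : (E'.patch ⊤ A).r a b := .inl ⟨ha, hb, trivial⟩
  rw [← h] at hab
  rcases hab with ⟨-, -, hab⟩ | ⟨ha', -, -⟩
  exacts [hab, absurd ha ha']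

lemma IsSaturated.subset_or_disjoint_of_subset_class {S : Set V} (hS : E.IsSaturated S)
    {x : V} (hA : A ⊆ {w | E.r x w}) : A ⊆ S ∨ Disjoint A S := by
  by_cases hx : x ∈ S
  · exact .inl fun a ha => hS (hA ha) hx
  · exact .inr (Set.disjoint_left.2 fun a ha haS => hx (hS (E.symm (hA ha)) haS))

end Setoid

section LowerApprox

variable {E R : Setoid V} {A : Set V}

lemma lowerApprox_subset (E : Setoid V) (S : Set V) : lowerApprox E S ⊆ S :=
  fun y hy => hy (E.refl y)

lemma isSaturated_lowerApprox (E : Setoid V) (S : Set V) : E.IsSaturated (lowerApprox E S) :=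
  fun _ _ hyz hy _ hzw => hy (E.trans hyz hzw)

lemma Setoid.IsSaturated.subset_lowerApprox_iff (hA : E.IsSaturated A) {S : Set V} :
    A ⊆ lowerApprox E S ↔ A ⊆ S :=
  ⟨fun h => h.trans (lowerApprox_subset E S), fun h _ hy _ hyz => h (hA hyz hy)⟩

lemma mem_lowerApprox_patch_iff_of_notMem (hA : E.IsSaturated A) {S : Set V} {y : V}
    (hy : y ∉ A) : y ∈ lowerApprox (E.patch R A) S ↔ y ∈ lowerApprox E S := by
  simp only [lowerApprox, Set.mem_ofPred_eq, Setoid.patch_rel_iff_of_notMem hA hy]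

lemma lowerApprox_patch_of_subset_or_disjoint (hA : E.IsSaturated A) {S : Set V}
    (hS : A ⊆ S ∨ Disjoint A S) : lowerApprox (E.patch R A) S = lowerApprox E S := by
  ext y
  by_cases hy : y ∈ A
  · rcases hS with hAS | hAS
    · exact iff_of_true (Setoid.isSaturated_patch.subset_lowerApprox_iff.2 hAS hy)
        (hA.subset_lowerApprox_iff.2 hAS hy)
    · exact iff_of_false (fun h => Set.disjoint_left.1 hAS hy (lowerApprox_subset _ S h))
        (fun h => Set.disjoint_left.1 hAS hy (lowerApprox_subset E S h))
  · exact mem_lowerApprox_patch_iff_of_notMem hA hy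

lemma lowerApprox_subset_lowerApprox_of_subset_class {x : V} (hA : A ⊆ {w | E.r x w})
    {T T' : Set V} (hout : ∀ y ∉ A, y ∈ T → y ∈ T') (hin : A ⊆ T → A ⊆ T') :
    lowerApprox E T ⊆ lowerApprox E T' := by
  intro z hz w hzw
  by_cases hw : w ∈ A
  · have hzx : E.r z x := E.trans hzw (E.symm (hA hw))
    exact hin (fun a ha => hz (E.trans hzx (hA ha))) hw
  · exact hout w hw (hz hzw)

lemma lowerApprox_congr_of_subset_class {x : V} (hA : A ⊆ {w | E.r x w}) {T T' : Set V}
    (hout : ∀ y ∉ A, y ∈ T ↔ y ∈ T') (hin : A ⊆ T ↔ A ⊆ T') :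
    lowerApprox E T = lowerApprox E T' :=
  (lowerApprox_subset_lowerApprox_of_subset_class hA (fun y hy => (hout y hy).1) hin.1).antisymm
    (lowerApprox_subset_lowerApprox_of_subset_class hA (fun y hy => (hout y hy).2) hin.2)

end LowerApprox

section Patching

variable (E1 E2 R : Setoid V) (x : V) (X : Set V)

lemma lowerApprox_patch_lowerApprox :
    lowerApprox (E2.patch R (lowerApprox E2 {w | E1.r x w})) (lowerApprox E1 X) =
      lowerApprox E2 (lowerApprox E1 X) :=
  lowerApprox_patch_of_subset_or_disjoint (isSaturated_lowerApprox E2 _)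
    ((isSaturated_lowerApprox E1 X).subset_or_disjoint_of_subset_class
      (lowerApprox_subset E2 _))

lemma lowerApprox_lowerApprox_patch :
    lowerApprox E2 (lowerApprox (E1.patch R (lowerApprox E1 {w | E2.r x w})) X) =
      lowerApprox E2 (lowerApprox E1 X) := by
  have hA := isSaturated_lowerApprox E1 {w | E2.r x w}
  refine lowerApprox_congr_of_subset_class (lowerApprox_subset E1 _)
    (fun y hy => mem_lowerApprox_patch_iff_of_notMem hA hy) ?_
  rw [Setoid.isSaturated_patch.subset_lowerApprox_iff, hA.subset_lowerApprox_iff]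

end Patching

theorem stmt_13_general (E1 E2 : Setoid V)
    (h : IsUniqueLLSolution E1 E2 (fun X => lowerApprox E2 (lowerApprox E1 X)))
    (x : V) :
    (lowerApprox E2 {w | E1.r x w}).Subsingleton ∧
    (lowerApprox E1 {w | E2.r x w}).Subsingleton := by
  have outer (R : Setoid V) : E2.patch R (lowerApprox E2 {w | E1.r x w}) = E2 :=
    (h.2 _ _ fun X => (lowerApprox_patch_lowerApprox E1 E2 R x X).symm).2
  have inner (R : Setoid V) : E1.patch R (lowerApprox E1 {w | E2.r x w}) = E1 :=
    (h.2 _ _ fun X => (lowerApprox_lowerApprox_patch E1 E2 R x X).symm).1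
  exact ⟨Setoid.subsingleton_of_patch_bot_eq_patch_top ((outer ⊥).trans (outer ⊤).symm),
    Setoid.subsingleton_of_patch_bot_eq_patch_top ((inner ⊥).trans (inner ⊤).symm)⟩

theorem stmt_13 [Fintype V] [Nonempty V] (E1 E2 : Setoid V)
    (h : IsUniqueLLSolution E1 E2 (fun X => lowerApprox E2 (lowerApprox E1 X)))
    (x : V) :
    (lowerApprox E2 {w | E1.r x w}).Subsingleton ∧
    (lowerApprox E1 {w | E2.r x w}).Subsingleton :=
  stmt_13_general E1 E2 h x
end

section
/- Let E1 and E2 be equivalence relations on V and let F = u_{E2} ∘ l_{E1}, so that (E1, E2) is a UL-solution of F. Then (E1, E2) is the unique UL-solution of F if and only if both of the following hold: (i) for all x, y ∈ V with ¬(x E2 y), u_{E1}([x]_{E2}) ≠ u_{E1}([y]_{E2}); (ii) for every x ∈ V there exists z ∈ V such that [x]_{E2} ∩ [z]_{E1} has exactly one element. -/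
/-!
`u_E ∘ l_{E1}` only sees `E` through the map `x ↦ u_{E1}([x]_E)`, and the first component of
any UL-solution is recovered from which sets have a nonempty image. So `(E1, E2)` is the unique
UL-solution exactly when `E2` is the only equivalence inducing the map `x ↦ u_{E1}([x]_{E2})`.
Condition (i) forbids coarsening `E2` along the kernel of this map; condition (ii) forbids
splitting a class `[x]_{E2}` into two parts that both meet every `E1`-class that `[x]_{E2}` meets.
-/

variable {V : Type*}

section Approx

variable {E E' E1 : Setoid V} {X Y : Set V} {x z : V}

theorem setOf_rel_eq_of_rel {a b : V} (h : E.r a b) : {y | E.r a y} = {y | E.r b y} :=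
  Set.ext fun _ => ⟨E.trans (E.symm h), E.trans h⟩

theorem upperApprox_nonempty_iff : (upperApprox E Y).Nonempty ↔ Y.Nonempty :=
  ⟨fun ⟨_, y, _, hy⟩ => ⟨y, hy⟩, fun ⟨y, hy⟩ => ⟨y, y, E.refl y, hy⟩⟩

theorem lowerApprox_setOf_rel : lowerApprox E {y | E.r x y} = {y | E.r x y} :=
  Set.ext fun _ => ⟨fun h => h (E.refl _), fun h _ hy => E.trans h hy⟩

/-- The classes of `E` are the minimal sets with nonempty `E`-lower approximation. -/
theorem Setoid.eq_of_lowerApprox_nonempty_iff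
    (h : ∀ X, (lowerApprox E X).Nonempty ↔ (lowerApprox E' X).Nonempty) : E = E' := by
  refine Setoid.ext fun x y => ?_
  obtain ⟨w, hw⟩ := (h {y | E.r x y}).1 ⟨x, fun _ => id⟩
  obtain ⟨v, hv⟩ := (h {u | E'.r w u}).2 ⟨w, fun _ => id⟩
  have hxv : E.r x v := hw (hv (E.refl v))
  have hxw : ∀ u, E.r x u → E'.r w u := fun u hu => hv (E.trans (E.symm hxv) hu)
  have hwx : E'.r w x := hxw x (E.refl x)
  exact ⟨fun hxy => E'.trans (E'.symm hwx) (hxw y hxy), fun hxy => hw (E'.trans hwx hxy)⟩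

theorem fst_eq_of_upperApprox_lowerApprox_eq {E1 E2 E3 E4 : Setoid V}
    (h : ∀ X, upperApprox E4 (lowerApprox E3 X) = upperApprox E2 (lowerApprox E1 X)) :
    E3 = E1 :=
  Setoid.eq_of_lowerApprox_nonempty_iff fun X => by
    rw [← upperApprox_nonempty_iff (E := E4), h X, upperApprox_nonempty_iff]

def upperClass (E1 E : Setoid V) (x : V) : Set V := upperApprox E1 {y | E.r x y}

theorem upperClass_eq_of_rel {a b : V} (h : E.r a b) : upperClass E1 E a = upperClass E1 E b := by
  rw [upperClass, upperClass, setOf_rel_eq_of_rel h]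

theorem mem_upperClass_iff_mem_upperApprox :
    z ∈ upperClass E1 E x ↔ x ∈ upperApprox E {y | E1.r z y} :=
  ⟨fun ⟨y, hzy, hxy⟩ => ⟨y, hxy, hzy⟩, fun ⟨y, hxy, hzy⟩ => ⟨y, hzy, hxy⟩⟩

theorem mem_upperApprox_lowerApprox :
    x ∈ upperApprox E (lowerApprox E1 X) ↔ ∃ z ∈ upperClass E1 E x, z ∈ lowerApprox E1 X :=
  ⟨fun ⟨y, hxy, hy⟩ => ⟨y, ⟨y, E1.refl y, hxy⟩, hy⟩,
    fun ⟨_, ⟨y, hzy, hxy⟩, hz⟩ => ⟨y, hxy, fun _ hu => hz (E1.trans hzy hu)⟩⟩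

theorem upperApprox_lowerApprox_eq_iff :
    (∀ X, upperApprox E (lowerApprox E1 X) = upperApprox E' (lowerApprox E1 X)) ↔
      upperClass E1 E = upperClass E1 E' := by
  constructor
  · intro h
    funext x
    ext z
    rw [mem_upperClass_iff_mem_upperApprox, mem_upperClass_iff_mem_upperApprox,
      ← lowerApprox_setOf_rel, h]
  · intro h X
    ext x
    simp only [mem_upperApprox_lowerApprox, h]

end Approx

theorem isUniqueULSolution_iff {E1 E2 : Setoid V} :
    IsUniqueULSolution E1 E2 (fun X => upperApprox E2 (lowerApprox E1 X)) ↔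
      ∀ E4 : Setoid V, upperClass E1 E4 = upperClass E1 E2 → E4 = E2 := by
  constructor
  · rintro ⟨-, huniq⟩ E4 h
    exact (huniq E1 E4 (upperApprox_lowerApprox_eq_iff.2 h.symm)).2
  · refine fun h => ⟨fun _ => rfl, fun E3 E4 hsol => ?_⟩
    obtain rfl : E3 = E1 := fst_eq_of_upperApprox_lowerApprox_eq fun X => (hsol X).symm
    exact ⟨rfl, h E4 (upperApprox_lowerApprox_eq_iff.1 hsol).symm⟩

section UpperClass

variable {E E' E1 : Setoid V}

theorem upperClass_ker_upperClass :
    upperClass E1 (Setoid.ker (upperClass E1 E)) = upperClass E1 E := by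
  funext x
  ext z
  constructor
  · rintro ⟨y, hzy, hxy⟩
    obtain ⟨w, hyw, hxw⟩ : y ∈ upperClass E1 E x :=
      (Setoid.ker_def.1 hxy).symm ▸ ⟨y, E1.refl y, E.refl y⟩
    exact ⟨w, E1.trans hzy hyw, hxw⟩
  · rintro ⟨w, hzw, hxw⟩
    exact ⟨w, hzw, Setoid.ker_def.2 (upperClass_eq_of_rel hxw)⟩

theorem upperClass_inf_ker {β : Type*} (f : V → β)
    (hf : ∀ a c, E.r a c → ∃ b, E1.r c b ∧ E.r a b ∧ f a = f b) :
    upperClass E1 (E ⊓ Setoid.ker f) = upperClass E1 E := by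
  funext x
  ext z
  constructor
  · rintro ⟨y, hzy, hxy⟩
    exact ⟨y, hzy, (Setoid.inf_iff_and.1 hxy).1⟩
  · rintro ⟨c, hzc, hxc⟩
    obtain ⟨b, hcb, hxb, hfb⟩ := hf x c hxc
    exact ⟨b, E1.trans hzc hcb, Setoid.inf_iff_and.2 ⟨hxb, Setoid.ker_def.2 hfb⟩⟩

theorem Setoid.exists_rep_inter [Nonempty V] (E1 : Setoid V) (S : Set V) :
    ∃ rep : V → V, (∀ d, (S ∩ {w | E1.r d w}).Nonempty → rep d ∈ S ∩ {w | E1.r d w}) ∧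
      ∀ d d', E1.r d d' → rep d = rep d' :=
  ⟨fun d => Classical.epsilon (· ∈ S ∩ {w | E1.r d w}), fun _ => Classical.epsilon_spec,
    fun _ _ h => by simp only [setOf_rel_eq_of_rel h]⟩

/-- Split `[x]_E` into the chosen representatives of its traces on the `E1`-classes and the
rest; when no trace is a singleton, both parts meet every `E1`-class that `[x]_E` meets. -/
theorem exists_ne_upperClass_eq_of_forall_ne_singleton (x : V)
    (hx : ∀ z a, {w | E.r x w} ∩ {w | E1.r z w} ≠ {a}) :
    ∃ E', upperClass E1 E' = upperClass E1 E ∧ E' ≠ E := by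
  have : Nonempty V := ⟨x⟩
  obtain ⟨rep, hrep, hrep_congr⟩ := E1.exists_rep_inter {w | E.r x w}
  have hother : ∀ c, E.r x c → ∃ b, (E.r x b ∧ E1.r c b) ∧ b ≠ rep c := fun c hxc => by
    by_contra! hb
    exact hx c (rep c) (Set.eq_singleton_iff_unique_mem.2
      ⟨hrep c ⟨c, hxc, E1.refl c⟩, hb⟩)
  have hfixed : ∀ c, E.r x c → rep (rep c) = rep c := fun c hxc =>
    (hrep_congr _ _ (hrep c ⟨c, hxc, E1.refl c⟩).2).symm
  have hmoved : ∀ c b, E1.r c b → b ≠ rep c → rep b ≠ b := fun c b hcb hb hfix =>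
    hb (hfix ▸ (hrep_congr c b hcb).symm)
  let f : V → Prop := fun a => E.r x a ∧ rep a = a
  have hf : ∀ a c, E.r a c → ∃ b, E1.r c b ∧ E.r a b ∧ f a = f b := by
    intro a c hac
    by_cases hxa : E.r x a
    · have hxc := E.trans hxa hac
      by_cases hfa : f a
      · obtain ⟨hxr, hcr⟩ := hrep c ⟨c, hxc, E1.refl c⟩
        exact ⟨rep c, hcr, E.trans (E.symm hxa) hxr,
          eq_iff_iff.2 (iff_of_true hfa ⟨hxr, hfixed c hxc⟩)⟩
      · obtain ⟨b, ⟨hxb, hcb⟩, hb⟩ := hother c hxc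
        exact ⟨b, hcb, E.trans (E.symm hxa) hxb,
          eq_iff_iff.2 (iff_of_false hfa fun h => hmoved c b hcb hb h.2)⟩
    · exact ⟨c, E1.refl c, hac, eq_iff_iff.2 (iff_of_false (fun h => hxa h.1)
        fun h => hxa (E.trans h.1 (E.symm hac)))⟩
  refine ⟨E ⊓ Setoid.ker f, upperClass_inf_ker f hf, fun heq => ?_⟩
  obtain ⟨hxr, -⟩ := hrep x ⟨x, E.refl x, E1.refl x⟩
  obtain ⟨b, ⟨hxb, hb⟩, hbr⟩ := hother x (E.refl x)
  have hrb : (E ⊓ Setoid.ker f) (rep x) b := by rw [heq]; exact E.trans (E.symm hxr) hxb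
  have hfb : f b := (Setoid.ker_def.1 (Setoid.inf_iff_and.1 hrb).2).mp ⟨hxr, hfixed x (E.refl x)⟩
  exact hmoved x b hb hbr hfb.2

theorem le_of_upperClass_eq
    (hinj : ∀ x y, ¬ E.r x y → upperClass E1 E x ≠ upperClass E1 E y)
    (h : upperClass E1 E' = upperClass E1 E) : E' ≤ E := by
  intro a b hab
  by_contra hn
  exact hinj a b hn (h ▸ upperClass_eq_of_rel hab)

/-- If `[a]_E ∩ [z]_{E1} = {c}`, the class `[z]_{E1}` forces every `E'`-class inside `[a]_E` to
contain `c`. -/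
theorem le_of_upperClass_eq_of_exists_singleton
    (hsingle : ∀ x, ∃ z a, {w | E.r x w} ∩ {w | E1.r z w} = {a})
    (hle : E' ≤ E) (h : upperClass E1 E' = upperClass E1 E) : E ≤ E' := by
  intro a b hab
  obtain ⟨z, c, hzc⟩ := hsingle a
  obtain ⟨hac, hzc'⟩ : c ∈ {w | E.r a w} ∩ {w | E1.r z w} := hzc ▸ rfl
  have hto_c : ∀ y, E.r a y → E'.r y c := by
    intro y hay
    obtain ⟨v, hzv, hyv⟩ : z ∈ upperClass E1 E' y :=
      h ▸ ⟨c, hzc', E.trans (E.symm hay) hac⟩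
    obtain rfl : v = c := Set.mem_singleton_iff.1 (hzc ▸ ⟨E.trans hay (hle hyv), hzv⟩)
    exact hyv
  exact E'.trans (hto_c a (E.refl a)) (E'.symm (hto_c b hab))

end UpperClass

theorem stmt_18_general (E1 E2 : Setoid V) :
    IsUniqueULSolution E1 E2 (fun X => upperApprox E2 (lowerApprox E1 X)) ↔
      ((∀ x y : V, ¬ E2.r x y →
          upperApprox E1 {z | E2.r x z} ≠ upperApprox E1 {z | E2.r y z}) ∧
       (∀ x : V, ∃ z : V, ∃ a : V, {w | E2.r x w} ∩ {w | E1.r z w} = {a})) := by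
  rw [isUniqueULSolution_iff]
  constructor
  · intro huniq
    refine ⟨fun x y hxy hux => hxy ?_, fun x => ?_⟩
    · rw [← huniq _ upperClass_ker_upperClass]
      exact Setoid.ker_def.2 hux
    · by_contra! hx
      obtain ⟨E4, h, hne⟩ := exists_ne_upperClass_eq_of_forall_ne_singleton x hx
      exact hne (huniq E4 h)
  · rintro ⟨hinj, hsingle⟩ E4 h
    have hle := le_of_upperClass_eq hinj h
    exact le_antisymm hle (le_of_upperClass_eq_of_exists_singleton hsingle hle h)

theorem stmt_18 [Fintype V] [Nonempty V] (E1 E2 : Setoid V) :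
    IsUniqueULSolution E1 E2 (fun X => upperApprox E2 (lowerApprox E1 X)) ↔
      ((∀ x y : V, ¬ E2.r x y →
          upperApprox E1 {z | E2.r x z} ≠ upperApprox E1 {z | E2.r y z}) ∧
       (∀ x : V, ∃ z : V, ∃ a : V, {w | E2.r x w} ∩ {w | E1.r z w} = {a})) :=
  stmt_18_general E1 E2
end
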